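/- arXiv:1008.0189 — 3 statements merged into one kernel-verified Lean document; each statement's English description precedes it below -/
import Mathlib

section
/- Let $V$ be a finite-dimensional complex inner product space and let $E_0^*, E_1^*, \ldots, E_d^*$ be a family of orthogonal projections on $V$ with mutually orthogonal images whose sum is the identity. Let $\chi \in V$ and let $A$ be a linear operator on $V$. Suppose there exist integers $0 \le w < w+t \le d$ such that $E_w^*\chi \neq 0$, $E_k^*\chi = 0$ for $w+1 \le k \le w+t$, and for each $i \ge 0$ with $w+i \le w+t-i$ we have $E_{w+i}^*(A^i\chi) \neq 0$ and $E_k^*(A^i\chi) = 0$ for $w+i+1 \le k \le w+t-i$. Then the vectors $\chi, A\chi, A^2\chi, \ldots, A^{\lfloor t/2 \rfloor}\chi$ are linearly independent. -/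
/-!
The iterates are triangular with respect to the projections `E (w + j)`: for `i < j ≤ t / 2`
the index `w + j` lies in the zero window `(w + i, w + t - i]` of `A ^ i χ`, while
`E (w + j) (A ^ j χ) ≠ 0`. Applying `E (w + j)` to a vanishing combination whose last nonzero
coefficient sits at `j` therefore leaves only that coefficient times a nonzero vector.
-/

theorem linearIndependent_of_triangular {ι R M N : Type*} [LinearOrder ι] [Ring R]
    [IsCancelMulZero R] [AddCommGroup M] [Module R M] [AddCommGroup N] [Module R N]
    [Module.IsTorsionFree R N] (v : ι → M) (f : ι → M →ₗ[R] N)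
    (hdiag : ∀ j, f j (v j) ≠ 0) (hlt : ∀ i j, i < j → f j (v i) = 0) :
    LinearIndependent R v := by
  rw [linearIndependent_iff]
  intro l hl
  by_contra hne
  have hsupp : l.support.Nonempty := Finsupp.support_nonempty_iff.mpr hne
  set j := l.support.max' hsupp
  have hlj : l j ≠ 0 := Finsupp.mem_support_iff.mp (l.support.max'_mem hsupp)
  have hproj : f j (Finsupp.linearCombination R v l) = l j • f j (v j) := by
    rw [Finsupp.linearCombination_apply, map_finsuppSum, Finsupp.sum_eq_single j]
    · exact map_smul _ _ _
    · intro i hli hij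
      have hij : i < j :=
        (l.support.le_max' i (Finsupp.mem_support_iff.mpr hli)).lt_of_ne hij
      rw [map_smul, hlt i j hij, smul_zero]
    · intro _; rw [zero_smul, map_zero]
  rw [hl, map_zero, eq_comm, smul_eq_zero] at hproj
  exact hproj.elim hlj (hdiag j)

theorem stmt_0_general {V : Type*} [NormedAddCommGroup V] [InnerProductSpace ℂ V]
    (w t : ℕ)
    (E : ℕ → (V →ₗ[ℂ] V))
    (χ : V) (A : V →ₗ[ℂ] V)
    (h3 : ∀ i : ℕ, w + i ≤ w + t - i →
      E (w + i) ((A ^ i) χ) ≠ 0 ∧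
      ∀ k, w + i + 1 ≤ k → k ≤ w + t - i → E k ((A ^ i) χ) = 0) :
    LinearIndependent ℂ (fun i : Fin (t / 2 + 1) => (A ^ (i : ℕ)) χ) := by
  refine linearIndependent_of_triangular _ (fun j => E (w + j))
    (fun j => (h3 j (by omega)).1) fun i j hij => ?_
  have hij : (i : ℕ) < j := hij
  exact (h3 i (by omega)).2 (w + j) (by omega) (by omega)

theorem stmt_0 {V : Type*} [NormedAddCommGroup V] [InnerProductSpace ℂ V]
    [FiniteDimensional ℂ V]
    (d w t : ℕ) (ht : 1 ≤ t) (hwtd : w + t ≤ d)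
    (E : ℕ → (V →ₗ[ℂ] V))
    (hidem : ∀ k, ∀ v : V, E k (E k v) = E k v)
    (hsymm : ∀ k, LinearMap.IsSymmetric (E k))
    (horth : ∀ k l, k ≠ l → ∀ v : V, E k (E l v) = 0)
    (hsum : ∀ v : V, ∑ k ∈ Finset.range (d + 1), E k v = v)
    (χ : V) (A : V →ₗ[ℂ] V)
    (h1 : E w χ ≠ 0)
    (h2 : ∀ k, w + 1 ≤ k → k ≤ w + t → E k χ = 0)
    (h3 : ∀ i : ℕ, w + i ≤ w + t - i →
      E (w + i) ((A ^ i) χ) ≠ 0 ∧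
      ∀ k, w + i + 1 ≤ k → k ≤ w + t - i → E k ((A ^ i) χ) = 0) :
    LinearIndependent ℂ (fun i : Fin (t / 2 + 1) => (A ^ (i : ℕ)) χ) :=
  stmt_0_general w t E χ A h3
end

section
/- Let $X \subseteq S^{d-1}$ be a finite nonempty set with degree set $A(X) = \{\langle x,y\rangle : x,y \in X, x \neq y\}$ of cardinality $s$, and let $F(x) = \prod_{\alpha \in A(X)} \frac{x - \alpha}{1 - \alpha}$ (a degree-$s$ annihilator polynomial with $F(1) = 1$). Write $F = \sum_{k=0}^{s} f_k Q_k$ in the Gegenbauer basis. Then $1 = \sum_{k=0}^{s} f_k b_k$, where $b_k = \frac{1}{|X|}\sum_{x,y \in X} Q_k(\langle x, y\rangle)$. -/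
open Polynomial

/-
Since `F` vanishes at the inner product of any two distinct points of `X`, the double sum
`∑ x, ∑ y, F ⟪x, y⟫` keeps only its diagonal terms, each equal to `F 1 = 1`, so it equals `|X|`.
Expanding `F` in the basis `Q k` and exchanging the sums, the same double sum equals
`|X| * ∑ k, f k * b k`.
-/

section UnitVectors

variable {E : Type*} [NormedAddCommGroup E] [InnerProductSpace ℝ E]

theorem real_inner_ne_one_of_ne {x y : E} (hx : ‖x‖ = 1) (hy : ‖y‖ = 1) (hxy : x ≠ y) :
    inner ℝ x y ≠ 1 :=
  fun h => hxy ((inner_eq_one_iff_of_norm_eq_one hx hy).mp h)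

theorem sum_sum_real_inner_eq_card_mul {X : Finset E} (hX : ∀ x ∈ X, ‖x‖ = 1) {p : ℝ → ℝ}
    (hp : ∀ x ∈ X, ∀ y ∈ X, x ≠ y → p (inner ℝ x y) = 0) :
    ∑ x ∈ X, ∑ y ∈ X, p (inner ℝ x y) = X.card * p 1 := by
  have hrow : ∀ x ∈ X, ∑ y ∈ X, p (inner ℝ x y) = p 1 := fun x hx => by
    rw [Finset.sum_eq_single_of_mem x hx fun y hy hyx => hp x hx y hy (Ne.symm hyx),
      real_inner_self_eq_norm_sq, hX x hx, one_pow]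
  rw [Finset.sum_congr rfl hrow, Finset.sum_const, nsmul_eq_mul]

end UnitVectors

section Annihilator

variable {K : Type*} [Field K]

theorem eval_prod_C_inv_mul_X_sub_C_of_mem {A : Finset K} {α : K} (hα : α ∈ A) :
    (∏ a ∈ A, C (1 / (1 - a)) * (X - C a)).eval α = 0 := by
  rw [eval_prod]
  exact Finset.prod_eq_zero hα (by simp)

theorem eval_one_prod_C_inv_mul_X_sub_C {A : Finset K} (hA : (1 : K) ∉ A) :
    (∏ a ∈ A, C (1 / (1 - a)) * (X - C a)).eval 1 = 1 := by
  rw [eval_prod]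
  refine Finset.prod_eq_one fun a ha => ?_
  have : 1 - a ≠ 0 := sub_ne_zero.mpr fun h => hA (h ▸ ha)
  simp [this]

end Annihilator

theorem stmt_13_general (d : ℕ) (X : Finset (EuclideanSpace ℝ (Fin d))) (hXne : X.Nonempty)
    (hsphere : ∀ x ∈ X, ‖x‖ = 1)
    (A : Finset ℝ)
    (hA : (A : Set ℝ) = {α : ℝ | ∃ x ∈ X, ∃ y ∈ X, x ≠ y ∧ (inner ℝ x y : ℝ) = α})
    (s : ℕ)
    (F : Polynomial ℝ)
    (hF : F = ∏ α ∈ A, Polynomial.C (1 / (1 - α)) * (Polynomial.X - Polynomial.C α))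
    (Q : ℕ → ℝ → ℝ) (f : ℕ → ℝ)
    (hf : ∀ t : ℝ, F.eval t = ∑ k ∈ Finset.range (s + 1), f k * Q k t)
    (b : ℕ → ℝ)
    (hb : ∀ k, b k = (1 / (X.card : ℝ)) * ∑ x ∈ X, ∑ y ∈ X, Q k (inner ℝ x y : ℝ)) :
    ∑ k ∈ Finset.range (s + 1), f k * b k = 1 := by
  have hmemA : ∀ x ∈ X, ∀ y ∈ X, x ≠ y → inner ℝ x y ∈ A := fun x hx y hy hxy => by
    rw [← Finset.mem_coe, hA]
    exact ⟨x, hx, y, hy, hxy, rfl⟩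
  have hone : (1 : ℝ) ∉ A := fun h => by
    obtain ⟨x, hx, y, hy, hxy, hxy1⟩ := (Set.ext_iff.mp hA 1).mp h
    exact real_inner_ne_one_of_ne (hsphere x hx) (hsphere y hy) hxy hxy1
  have hdiag : ∑ x ∈ X, ∑ y ∈ X, F.eval (inner ℝ x y) = X.card := by
    rw [sum_sum_real_inner_eq_card_mul (p := fun t => F.eval t) hsphere fun x hx y hy hxy => by
      simpa only [hF] using eval_prod_C_inv_mul_X_sub_C_of_mem (hmemA x hx y hy hxy)]
    rw [hF, eval_one_prod_C_inv_mul_X_sub_C hone, mul_one]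
  have hcard : (X.card : ℝ) ≠ 0 := Nat.cast_ne_zero.mpr hXne.card_pos.ne'
  calc ∑ k ∈ Finset.range (s + 1), f k * b k
      = 1 / X.card * ∑ x ∈ X, ∑ y ∈ X, ∑ k ∈ Finset.range (s + 1), f k * Q k (inner ℝ x y) := by
        simp only [hb, Finset.mul_sum]
        rw [Finset.sum_comm]
        refine Finset.sum_congr rfl fun x _ => ?_
        rw [Finset.sum_comm]
        exact Finset.sum_congr rfl fun y _ => Finset.sum_congr rfl fun k _ => by ring
    _ = 1 := by simp only [← hf, hdiag, one_div, inv_mul_cancel₀ hcard]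

theorem stmt_13 (d : ℕ) (X : Finset (EuclideanSpace ℝ (Fin d))) (hXne : X.Nonempty)
    (hsphere : ∀ x ∈ X, ‖x‖ = 1)
    (A : Finset ℝ)
    (hA : (A : Set ℝ) = {α : ℝ | ∃ x ∈ X, ∃ y ∈ X, x ≠ y ∧ (inner ℝ x y : ℝ) = α})
    (s : ℕ) (hs : s = A.card)
    (F : Polynomial ℝ)
    (hF : F = ∏ α ∈ A, Polynomial.C (1 / (1 - α)) * (Polynomial.X - Polynomial.C α))
    (Q : ℕ → ℝ → ℝ) (f : ℕ → ℝ)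
    (hf : ∀ t : ℝ, F.eval t = ∑ k ∈ Finset.range (s + 1), f k * Q k t)
    (b : ℕ → ℝ)
    (hb : ∀ k, b k = (1 / (X.card : ℝ)) * ∑ x ∈ X, ∑ y ∈ X, Q k (inner ℝ x y : ℝ)) :
    ∑ k ∈ Finset.range (s + 1), f k * b k = 1 :=
  stmt_13_general d X hXne hsphere A hA s F hF Q f hf b hb
end

section
/- Let $X \subseteq S^{d-1}$ be a finite nonempty set with degree $s$ (i.e., $|\{\langle x,y\rangle : x \ne y \in X\}| = s$) and suppose the sequence $b_k = \frac{1}{|X|}\sum_{x,y\in X} Q_k(\langle x,y\rangle)$ satisfies $b_w > 0$ and $b_{w+1} = \cdots = b_{w+t} = 0$ for some $w \ge 0$, $t \ge 1$, with $w + t + 1 \le$ any index where $b$ is next nonzero. Then $t \le 2s$. -/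
/-!
Multiply the annihilator `F = ∏_{α ∈ A} (x - α)` of the inner products, of degree `s`, by
`Q_{w+s+1}`. The three-term recurrence puts `x · Q_k` in the span of `Q_{k-1}, Q_{k+1}`, so
`F · Q_{w+s+1}` is a combination of `Q_{w+1}, …, Q_{w+2s+1}`. If `t > 2s` all of these have
vanishing pair sums `∑_{x,y} Q_k(⟨x,y⟩)`, hence so does `F · Q_{w+s+1}`. But `F` kills every
off-diagonal term, so that pair sum is `|X| F(1) Q_{w+s+1}(1)`, which is nonzero since `1 ∉ A`
and `Q_k(1) > 0`.
-/

open Polynomial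

/-- The Gegenbauer polynomials on `S^{d-1}`, normalized as in Delsarte–Goethals–Seidel:
`Q_0 = 1`, `Q_1 = d·x`, and
`((k+1)/(d+2k)) Q_{k+1} = x Q_k - ((d+k-3)/(d+2k-4)) Q_{k-1}` for `k ≥ 1`. -/
noncomputable def gegenbauer (d : ℕ) : ℕ → Polynomial ℝ
  | 0 => 1
  | 1 => Polynomial.C (d : ℝ) * Polynomial.X
  | (m + 2) =>
      Polynomial.C (((d : ℝ) + 2 * (m : ℝ) + 2) / ((m : ℝ) + 2)) *
        (Polynomial.X * gegenbauer d (m + 1) -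
          Polynomial.C (((d : ℝ) + (m : ℝ) - 2) / ((d : ℝ) + 2 * (m : ℝ) - 2)) *
            gegenbauer d m)

lemma gegenbauer_eval_one_succ {d : ℕ} (hd : 3 ≤ d) (k : ℕ) :
    ((k : ℝ) + 1) * (2 * k + d - 2) * (gegenbauer d (k + 1)).eval 1 =
      (2 * k + d) * (k + d - 2) * (gegenbauer d k).eval 1 := by
  have hd' : (3 : ℝ) ≤ d := by exact_mod_cast hd
  induction k with
  | zero => simp [gegenbauer]; ring
  | succ n ih =>
    have hn : (0 : ℝ) ≤ n := n.cast_nonneg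
    have hden : (d : ℝ) + n * 2 - 2 ≠ 0 := by linarith
    simp only [gegenbauer, eval_mul, eval_C, eval_sub, eval_X, one_mul]
    push_cast
    field_simp
    linear_combination ((n : ℝ) + 2) * (d + 2 * n + 2) * ih

lemma gegenbauer_eval_one_pos {d : ℕ} (hd : 3 ≤ d) (k : ℕ) : 0 < (gegenbauer d k).eval 1 := by
  have hd' : (3 : ℝ) ≤ d := by exact_mod_cast hd
  induction k with
  | zero => simp [gegenbauer]
  | succ n ih =>
    have hn : (0 : ℝ) ≤ n := n.cast_nonneg
    have h := gegenbauer_eval_one_succ hd n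
    have hl : (0 : ℝ) < ((n : ℝ) + 1) * (2 * n + d - 2) := by nlinarith
    have hr : (0 : ℝ) < (2 * n + d) * (n + d - 2) := by nlinarith
    exact pos_of_mul_pos_right (h ▸ mul_pos hr ih) hl.le

noncomputable def gegenbauerSpan (d a b : ℕ) : Submodule ℝ ℝ[X] :=
  Submodule.span ℝ (gegenbauer d '' Set.Icc a b)

lemma gegenbauer_mem_gegenbauerSpan {d a b k : ℕ} (hak : a ≤ k) (hkb : k ≤ b) :
    gegenbauer d k ∈ gegenbauerSpan d a b :=
  Submodule.subset_span ⟨k, ⟨hak, hkb⟩, rfl⟩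

lemma gegenbauerSpan_mono {d a b a' b' : ℕ} (ha : a' ≤ a) (hb : b ≤ b') :
    gegenbauerSpan d a b ≤ gegenbauerSpan d a' b' :=
  Submodule.span_mono (Set.image_mono (Set.Icc_subset_Icc ha hb))

lemma X_mul_gegenbauer_mem_gegenbauerSpan {d : ℕ} (hd : d ≠ 0) (k : ℕ) :
    X * gegenbauer d k ∈ gegenbauerSpan d (k - 1) (k + 1) := by
  cases k with
  | zero =>
    have hX : X * gegenbauer d 0 = (d : ℝ)⁻¹ • gegenbauer d 1 := by
      rw [gegenbauer, gegenbauer, smul_eq_C_mul, ← mul_assoc, ← C_mul,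
        inv_mul_cancel₀ (Nat.cast_ne_zero.mpr hd), C_1, one_mul, mul_one]
    rw [hX]
    exact Submodule.smul_mem _ _ (gegenbauer_mem_gegenbauerSpan (by omega) le_rfl)
  | succ n =>
    have hr : ((d : ℝ) + 2 * n + 2) / (n + 2) ≠ 0 := by positivity
    have hX : X * gegenbauer d (n + 1) =
        (((d : ℝ) + 2 * n + 2) / (n + 2))⁻¹ • gegenbauer d (n + 2) +
          (((d : ℝ) + n - 2) / (d + 2 * n - 2)) • gegenbauer d n := by
      rw [gegenbauer, smul_eq_C_mul, smul_eq_C_mul, ← mul_assoc, ← C_mul, inv_mul_cancel₀ hr,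
        C_1, one_mul, sub_add_cancel]
    rw [hX]
    exact add_mem (Submodule.smul_mem _ _ (gegenbauer_mem_gegenbauerSpan (by omega) le_rfl))
      (Submodule.smul_mem _ _ (gegenbauer_mem_gegenbauerSpan le_rfl (by omega)))

lemma X_mul_mem_gegenbauerSpan {d a b : ℕ} (hd : d ≠ 0) {p : ℝ[X]}
    (hp : p ∈ gegenbauerSpan d a b) : X * p ∈ gegenbauerSpan d (a - 1) (b + 1) := by
  suffices gegenbauerSpan d a b ≤
      (gegenbauerSpan d (a - 1) (b + 1)).comap (LinearMap.mulLeft ℝ X) from this hp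
  refine Submodule.span_le.mpr ?_
  rintro _ ⟨k, ⟨hak, hkb⟩, rfl⟩
  exact gegenbauerSpan_mono (by omega) (by omega) (X_mul_gegenbauer_mem_gegenbauerSpan hd k)

lemma X_pow_mul_mem_gegenbauerSpan {d a b : ℕ} (hd : d ≠ 0) {p : ℝ[X]}
    (hp : p ∈ gegenbauerSpan d a b) (m : ℕ) :
    X ^ m * p ∈ gegenbauerSpan d (a - m) (b + m) := by
  induction m with
  | zero => simpa using hp
  | succ m ih =>
    rw [pow_succ', mul_assoc]
    exact gegenbauerSpan_mono (by omega) (by omega) (X_mul_mem_gegenbauerSpan hd ih)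

lemma mul_gegenbauer_mem_gegenbauerSpan {d n : ℕ} (hd : d ≠ 0) {F : ℝ[X]}
    (hF : F.natDegree ≤ n) (j : ℕ) : F * gegenbauer d j ∈ gegenbauerSpan d (j - n) (j + n) := by
  rw [F.as_sum_range' (n + 1) (Nat.lt_succ_of_le hF), Finset.sum_mul]
  refine Submodule.sum_mem _ fun i hi => ?_
  have hi : i ≤ n := Nat.lt_succ_iff.mp (Finset.mem_range.mp hi)
  rw [← C_mul_X_pow_eq_monomial, mul_assoc, ← smul_eq_C_mul]
  exact Submodule.smul_mem _ _ <| gegenbauerSpan_mono (by omega) (by omega) <|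
    X_pow_mul_mem_gegenbauerSpan hd (gegenbauer_mem_gegenbauerSpan le_rfl le_rfl) i

section FiniteSets

variable {E : Type*} [NormedAddCommGroup E] [InnerProductSpace ℝ E]

noncomputable def pairEvalSum (S : Finset E) : ℝ[X] →ₗ[ℝ] ℝ :=
  ∑ x ∈ S, ∑ y ∈ S, leval (inner ℝ x y)

lemma pairEvalSum_apply (S : Finset E) (p : ℝ[X]) :
    pairEvalSum S p = ∑ x ∈ S, ∑ y ∈ S, p.eval (inner ℝ x y) := by
  simp [pairEvalSum]

lemma pairEvalSum_mul_of_eval_eq_zero {S : Finset E} (hS : ∀ x ∈ S, ‖x‖ = 1) {F : ℝ[X]}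
    (hF : ∀ x ∈ S, ∀ y ∈ S, x ≠ y → F.eval (inner ℝ x y) = 0) (G : ℝ[X]) :
    pairEvalSum S (F * G) = S.card * (F.eval 1 * G.eval 1) := by
  rw [pairEvalSum_apply, ← nsmul_eq_mul, ← Finset.sum_const]
  refine Finset.sum_congr rfl fun x hx => ?_
  rw [Finset.sum_eq_single_of_mem x hx fun y hy hyx => by rw [eval_mul, hF x hx y hy hyx.symm,
    zero_mul], real_inner_self_eq_norm_sq, hS x hx, one_pow, eval_mul]

lemma exists_annihilator {S : Finset E} (hS : ∀ x ∈ S, ‖x‖ = 1) {A : Finset ℝ}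
    (hA : (A : Set ℝ) = {α : ℝ | ∃ x ∈ S, ∃ y ∈ S, x ≠ y ∧ inner ℝ x y = α}) :
    ∃ F : ℝ[X], F.natDegree = A.card ∧ F.eval 1 ≠ 0 ∧
      ∀ x ∈ S, ∀ y ∈ S, x ≠ y → F.eval (inner ℝ x y) = 0 := by
  refine ⟨∏ α ∈ A, (X - C α), by simp, ?_, fun x hx y hy hxy => ?_⟩
  · simp only [eval_prod, eval_sub, eval_X, eval_C, Finset.prod_ne_zero_iff, sub_ne_zero]
    rintro α hα rfl
    obtain ⟨x, hx, y, hy, hxy, hxy1⟩ := (Set.ext_iff.mp hA 1).mp hα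
    exact hxy ((inner_eq_one_iff_of_norm_eq_one (hS x hx) (hS y hy)).mp hxy1)
  · have hA_mem : inner ℝ x y ∈ A := by
      rw [← Finset.mem_coe, hA]; exact ⟨x, hx, y, hy, hxy, rfl⟩
    rw [eval_prod]
    exact Finset.prod_eq_zero hA_mem (by simp)

end FiniteSets

theorem stmt_14_general (d : ℕ) (hd : 3 ≤ d)
    (X : Finset (EuclideanSpace ℝ (Fin d))) (hXne : X.Nonempty)
    (hsphere : ∀ x ∈ X, ‖x‖ = 1)
    (A : Finset ℝ)
    (hA : (A : Set ℝ) = {α : ℝ | ∃ x ∈ X, ∃ y ∈ X, x ≠ y ∧ (inner ℝ x y : ℝ) = α})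
    (s : ℕ) (hs : s = A.card)
    (b : ℕ → ℝ)
    (hb : ∀ k, b k = (1 / (X.card : ℝ)) *
      ∑ x ∈ X, ∑ y ∈ X, (gegenbauer d k).eval (inner ℝ x y : ℝ))
    (w t : ℕ)
    (hzero : ∀ k, w + 1 ≤ k → k ≤ w + t → b k = 0) :
    t ≤ 2 * s := by
  by_contra! hlt
  have hcard : (0 : ℝ) < X.card := by exact_mod_cast hXne.card_pos
  obtain ⟨F, hF_deg, hF_one, hF_vanish⟩ := exists_annihilator hsphere hA
  have hker : gegenbauerSpan d (w + 1) (w + 2 * s + 1) ≤ LinearMap.ker (pairEvalSum X) := by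
    refine Submodule.span_le.mpr ?_
    rintro _ ⟨k, ⟨hwk, hkw⟩, rfl⟩
    have hbk := hb k
    rw [hzero k hwk (by omega), eq_comm, mul_eq_zero] at hbk
    simpa [pairEvalSum_apply, hcard.ne'] using hbk
  have hmem :=
    mul_gegenbauer_mem_gegenbauerSpan (show d ≠ 0 by omega) (hs ▸ hF_deg).le (w + s + 1)
  rw [show w + s + 1 - s = w + 1 by omega, show w + s + 1 + s = w + 2 * s + 1 by omega]
    at hmem
  have hsum := hker hmem
  rw [LinearMap.mem_ker, pairEvalSum_mul_of_eval_eq_zero hsphere hF_vanish] at hsum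
  exact mul_ne_zero hcard.ne' (mul_ne_zero hF_one (gegenbauer_eval_one_pos hd _).ne') hsum

theorem stmt_14 (d : ℕ) (hd : 3 ≤ d)
    (X : Finset (EuclideanSpace ℝ (Fin d))) (hXne : X.Nonempty)
    (hsphere : ∀ x ∈ X, ‖x‖ = 1)
    (A : Finset ℝ)
    (hA : (A : Set ℝ) = {α : ℝ | ∃ x ∈ X, ∃ y ∈ X, x ≠ y ∧ (inner ℝ x y : ℝ) = α})
    (s : ℕ) (hs : s = A.card)
    (b : ℕ → ℝ)
    (hb : ∀ k, b k = (1 / (X.card : ℝ)) *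
      ∑ x ∈ X, ∑ y ∈ X, (gegenbauer d k).eval (inner ℝ x y : ℝ))
    (w t : ℕ) (ht : 1 ≤ t)
    (hw : 0 < b w)
    (hzero : ∀ k, w + 1 ≤ k → k ≤ w + t → b k = 0) :
    t ≤ 2 * s :=
  stmt_14_general d hd X hXne hsphere A hA s hs b hb w t hzero
end
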